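/- Let 𝒜 = {a,b,c,d}. If x, y ∈ 𝒜⁺ are positive words such that x is obtained from y by a cyclic block interchange, then ν(x) − ν(y) ≤ 6. -/

import Mathlib

/-- `w` is a cyclic block interchange of `v`. -/
def IsCBI {A : Type*} (v w : List A) : Prop :=
  ∃ v' w' : List A, List.IsRotated v' v ∧ List.IsRotated w' w ∧
    ∃ w1 w2 w3 w4 : List A, v' = w1 ++ w2 ++ w3 ++ w4 ∧ w' = w1 ++ w4 ++ w3 ++ w2

/-- The four-letter alphabet `𝒜 = {a,b,c,d}`. -/
inductive Letter where
  | a | b | c | d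
deriving DecidableEq

open Letter

/-- `ν_{xy}(u)`: the number of occurrences of `xy` as a cyclic subword of `u`. -/
def nuPair (p q : Letter) (u : List Letter) : ℕ :=
  (List.range u.length).countP
    (fun i => decide (u[i]? = some p ∧ u[(i + 1) % u.length]? = some q))

/-- The function `ν = ν_{aa} + ν_{bc} + ν_{cd} + ν_{db} − ν_{ac} − ν_{cc} − ν_{dd} −
ν_{da} − ν_{bb}`. -/
def nu (u : List Letter) : ℤ :=
  (nuPair a a u : ℤ) + nuPair b c u + nuPair c d u + nuPair d b u
    - nuPair a c u - nuPair c c u - nuPair d d u - nuPair d a u - nuPair b b u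

/-!
`ν` is a sum over the cyclic adjacent pairs of the word of a weight `nuWeight` with values
in `{-1, 0, 1}`. Cut both words of a block interchange into the blocks `w₁, w₂, w₃, w₄`: the
pairs inside a block are common to both words, so only the pairs straddling two blocks change.
If some block is empty, each word has at most three such pairs, and the difference is at most
`3 + 3`. If all four blocks are nonempty, the eight boundary terms regroup into two sums of the
shape `f e p - f e q + f e' q - f e' p`, each of which is at most `3` for this particular weight.
-/

section CyclicWeight

variable {α : Type*} (f : α → α → ℤ)

/-- The weight of a pair of optional letters; a missing letter contributes `0`, so that the
boundary formulas below hold for empty words too. -/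
def optWeight : Option α → Option α → ℤ
  | some x, some y => f x y
  | _, _ => 0

def pathWeight : List α → ℤ
  | [] => 0
  | x :: t => optWeight f (some x) t.head? + pathWeight t

def cyclicWeight (u : List α) : ℤ :=
  pathWeight f u + optWeight f u.getLast? u.head?

@[simp]
theorem optWeight_none_left (o : Option α) : optWeight f none o = 0 := rfl

@[simp]
theorem optWeight_none_right (o : Option α) : optWeight f o none = 0 := by
  cases o <;> rfl

theorem pathWeight_append (u v : List α) :
    pathWeight f (u ++ v) = pathWeight f u + pathWeight f v + optWeight f u.getLast? v.head? := by
  induction u with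
  | nil => simp [pathWeight]
  | cons x t ih =>
    cases t with
    | nil => simp [pathWeight, add_comm]
    | cons y s =>
      simp only [List.cons_append, pathWeight, List.head?_cons, List.getLast?_cons_cons] at ih ⊢
      rw [ih]
      ring

theorem cyclicWeight_cons (x : α) (t : List α) :
    cyclicWeight f (x :: t) = cyclicWeight f (t ++ [x]) := by
  cases t with
  | nil => rfl
  | cons y s =>
    rw [cyclicWeight, cyclicWeight, ← List.singleton_append, pathWeight_append,
      pathWeight_append]
    rw [List.getLast?_append_cons, List.getLast?_concat, List.singleton_append, List.cons_append]
    simp only [pathWeight, List.head?_cons, List.head?_nil, List.getLast?_singleton, optWeight]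
    ring

theorem cyclicWeight_rotate (u : List α) (n : ℕ) :
    cyclicWeight f (u.rotate n) = cyclicWeight f u := by
  induction n generalizing u with
  | zero => simp
  | succ n ih =>
    cases u with
    | nil => simp
    | cons x t => rw [List.rotate_cons_succ, ih, cyclicWeight_cons]

theorem List.IsRotated.cyclicWeight_eq {u v : List α} (h : u ~r v) :
    cyclicWeight f u = cyclicWeight f v := by
  obtain ⟨n, rfl⟩ := h
  exact (cyclicWeight_rotate f u n).symm

theorem pathWeight_eq_sum (u : List α) :
    pathWeight f u = ∑ i ∈ Finset.range u.length, optWeight f u[i]? u[i + 1]? := by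
  induction u with
  | nil => rfl
  | cons x t ih =>
    rw [List.length_cons, Finset.sum_range_succ', pathWeight, ih, add_comm]
    simp [List.head?_eq_getElem?]

theorem cyclicWeight_eq_sum (u : List α) :
    cyclicWeight f u =
      ∑ i ∈ Finset.range u.length, optWeight f u[i]? u[(i + 1) % u.length]? := by
  obtain rfl | hu := eq_or_ne u []
  · rfl
  obtain ⟨n, hn⟩ : ∃ n, u.length = n + 1 := Nat.exists_eq_succ_of_ne_zero (by simpa using hu)
  rw [cyclicWeight, pathWeight_eq_sum, hn, Finset.sum_range_succ, Finset.sum_range_succ,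
    Nat.mod_self, List.getLast?_eq_getElem?, List.head?_eq_getElem?, hn, Nat.add_sub_cancel,
    List.getElem?_eq_none (by omega : u.length ≤ n + 1), optWeight_none_right, add_zero]
  congr 1
  refine Finset.sum_congr rfl fun i hi => ?_
  rw [Nat.mod_eq_of_lt (by simpa using hi)]

section Bounds

variable {f} {M K : ℤ}

theorem abs_optWeight_le (hf : ∀ x y, |f x y| ≤ M) (hM : 0 ≤ M) :
    ∀ o o' : Option α, |optWeight f o o'| ≤ M
  | some x, some y => hf x y
  | none, _ | some _, none => by simpa [optWeight] using hM

theorem abs_cyclicWeight_append3_sub_le (hf : ∀ x y, |f x y| ≤ M) (hM : 0 ≤ M)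
    (u v w : List α) :
    |cyclicWeight f (u ++ v ++ w) - (pathWeight f u + pathWeight f v + pathWeight f w)| ≤
      3 * M := by
  have h₁ := abs_optWeight_le hf hM u.getLast? v.head?
  have h₂ := abs_optWeight_le hf hM (u ++ v).getLast? w.head?
  have h₃ := abs_optWeight_le hf hM (u ++ v ++ w).getLast? (u ++ v ++ w).head?
  rw [cyclicWeight, pathWeight_append, pathWeight_append]
  rw [abs_le] at *
  constructor <;> linarith

theorem cyclicWeight_append3_sub_le (hf : ∀ x y, |f x y| ≤ M) (hM : 0 ≤ M)
    {u v w u' v' w' : List α}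
    (h : pathWeight f u' + pathWeight f v' + pathWeight f w' =
      pathWeight f u + pathWeight f v + pathWeight f w) :
    cyclicWeight f (u' ++ v' ++ w') - cyclicWeight f (u ++ v ++ w) ≤ 6 * M := by
  have h₁ := abs_le.mp (abs_cyclicWeight_append3_sub_le hf hM u v w)
  have h₂ := abs_le.mp (abs_cyclicWeight_append3_sub_le hf hM u' v' w')
  linarith

theorem cyclicWeight_append4 {u v w z : List α} (hu : u ≠ []) (hv : v ≠ []) (hw : w ≠ [])
    (hz : z ≠ []) :
    cyclicWeight f (u ++ v ++ w ++ z) =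
      pathWeight f u + pathWeight f v + pathWeight f w + pathWeight f z
        + f (u.getLast hu) (v.head hv) + f (v.getLast hv) (w.head hw)
        + f (w.getLast hw) (z.head hz) + f (z.getLast hz) (u.head hu) := by
  simp only [cyclicWeight, pathWeight_append, List.getLast?_append_of_ne_nil _ hz,
    List.getLast?_append_of_ne_nil _ hw, List.getLast?_append_of_ne_nil _ hv,
    List.head?_append, List.getLast?_eq_some_getLast hu,
    List.getLast?_eq_some_getLast hv, List.getLast?_eq_some_getLast hw,
    List.getLast?_eq_some_getLast hz, List.head?_eq_some_head hu, List.head?_eq_some_head hv,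
    List.head?_eq_some_head hw, List.head?_eq_some_head hz, Option.some_or, optWeight]
  ring

theorem cyclicWeight_blockInterchange_sub_le (hf : ∀ x y, |f x y| ≤ M) (hM : 0 ≤ M)
    (hK : ∀ p q e e', f e p - f e q + (f e' q - f e' p) ≤ K) (w₁ w₂ w₃ w₄ : List α) :
    cyclicWeight f (w₁ ++ w₄ ++ w₃ ++ w₂) - cyclicWeight f (w₁ ++ w₂ ++ w₃ ++ w₄)
      ≤ max (6 * M) (2 * K) := by
  refine le_max_iff.mpr ?_
  rcases eq_or_ne w₁ [] with rfl | h₁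
  · simp only [List.nil_append]
    exact .inl <| cyclicWeight_append3_sub_le hf hM (by ring)
  rcases eq_or_ne w₂ [] with rfl | h₂
  · simp only [List.append_nil]
    exact .inl <| cyclicWeight_append3_sub_le hf hM (by ring)
  rcases eq_or_ne w₃ [] with rfl | h₃
  · simp only [List.append_nil]
    exact .inl <| cyclicWeight_append3_sub_le hf hM (by ring)
  rcases eq_or_ne w₄ [] with rfl | h₄
  · simp only [List.append_nil]
    exact .inl <| cyclicWeight_append3_sub_le hf hM (by ring)
  rw [cyclicWeight_append4 h₁ h₄ h₃ h₂, cyclicWeight_append4 h₁ h₂ h₃ h₄]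
  have hK₁₃ := hK (w₄.head h₄) (w₂.head h₂) (w₁.getLast h₁) (w₃.getLast h₃)
  have hK₂₄ := hK (w₁.head h₁) (w₃.head h₃) (w₂.getLast h₂) (w₄.getLast h₄)
  exact .inr (by linarith)

theorem IsCBI.cyclicWeight_sub_le (hf : ∀ x y, |f x y| ≤ M) (hM : 0 ≤ M)
    (hK : ∀ p q e e', f e p - f e q + (f e' q - f e' p) ≤ K) {v w : List α} (h : IsCBI v w) :
    cyclicWeight f w - cyclicWeight f v ≤ max (6 * M) (2 * K) := by
  obtain ⟨v', w', hv, hw, w₁, w₂, w₃, w₄, rfl, rfl⟩ := h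
  rw [← hv.cyclicWeight_eq, ← hw.cyclicWeight_eq]
  exact cyclicWeight_blockInterchange_sub_le hf hM hK w₁ w₂ w₃ w₄

end Bounds

end CyclicWeight

instance : Fintype Letter :=
  ⟨{a, b, c, d}, fun x => by cases x <;> decide⟩

def nuWeight : Letter → Letter → ℤ
  | a, a | b, c | c, d | d, b => 1
  | a, c | c, c | d, d | d, a | b, b => -1
  | _, _ => 0

theorem abs_nuWeight_le_one : ∀ p q, |nuWeight p q| ≤ 1 := by decide

theorem nuWeight_four_point :
    ∀ p q e e', nuWeight e p - nuWeight e q + (nuWeight e' q - nuWeight e' p) ≤ 3 := by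
  decide

theorem cast_countP_range (n : ℕ) (p : ℕ → Bool) :
    ((List.range n).countP p : ℤ) = ∑ i ∈ Finset.range n, if p i then 1 else 0 := by
  induction n with
  | zero => rfl
  | succ n ih =>
    rw [List.range_succ, List.countP_append, Finset.sum_range_succ, Nat.cast_add, ih]
    simp [List.countP_cons]

theorem nu_eq_cyclicWeight (u : List Letter) : nu u = cyclicWeight nuWeight u := by
  simp only [nu, nuPair, cast_countP_range, ← Finset.sum_add_distrib, ← Finset.sum_sub_distrib,
    cyclicWeight_eq_sum]
  refine Finset.sum_congr rfl fun i _ => ?_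
  generalize u[i]? = o; generalize u[(i + 1) % u.length]? = o'
  rcases o with _ | _ | _ | _ | _ <;> rcases o' with _ | _ | _ | _ | _ <;> rfl

/-- If `x` is obtained from `y` by a cyclic block interchange, then
`ν(x) − ν(y) ≤ 6`. -/
theorem nu_cbi_le_six (x y : List Letter) (h : IsCBI y x) :
    nu x - nu y ≤ 6 := by
  rw [nu_eq_cyclicWeight, nu_eq_cyclicWeight]
  exact (h.cyclicWeight_sub_le abs_nuWeight_le_one zero_le_one nuWeight_four_point).trans_eq
    (by norm_num)
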